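/- arXiv:0910.4536 — 5 statements merged into one kernel-verified Lean document; each statement's English description precedes it below -/
import Mathlib

section
/- Let f : [0,∞) → [0,∞) be continuous, differentiable where positive, and satisfy the differential inequality f'(t) ≤ -2γ f(t)^((1+ε)/2) whenever f(t) > 0, with γ > 0 and 0 < ε < 1. Then for all t ≥ 0, f(t) ≤ (max(f(0)^((1-ε)/2) - γ(1-ε)t, 0))^(2/(1-ε)). In particular f(t) = 0 for all t ≥ f(0)^((1-ε)/2)/(γ(1-ε)). -/
/-!
Put `p = (1 - ε) / 2`. Wherever `f > 0`, the chain rule and the differential inequality give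
`(f ^ p)' = p f ^ (p - 1) f' ≤ -2γ p = -γ (1 - ε)`, because the powers of `f` cancel. Hence
`f ^ p` decreases at rate at least `γ (1 - ε)` on every interval where it is positive. Applied on
`[0, t]`, or from the last zero of `f` in `[0, t]` if there is one, this gives
`f t ^ p ≤ max (f 0 ^ p - γ (1 - ε) t) 0`; raise to the power `1 / p = 2 / (1 - ε)`.
-/

open Set

theorem le_sub_mul_of_hasDerivAt_le_neg {g g' : ℝ → ℝ} {a b c : ℝ} (hab : a ≤ b)
    (hg : ContinuousOn g (Icc a b)) (hderiv : ∀ x ∈ Ioo a b, HasDerivAt g (g' x) x)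
    (hle : ∀ x ∈ Ioo a b, g' x ≤ -c) :
    g b ≤ g a - c * (b - a) := by
  rw [← interior_Icc] at hderiv hle
  have := (convex_Icc a b).image_sub_le_mul_sub_of_deriv_le hg
    (fun x hx => (hderiv x hx).differentiableAt.differentiableWithinAt)
    (fun x hx => (hderiv x hx).deriv ▸ hle x hx)
    a (left_mem_Icc.2 hab) b (right_mem_Icc.2 hab) hab
  linarith

theorem ContinuousOn.exists_last_zero_Icc {g : ℝ → ℝ} {a b z : ℝ}
    (hg : ContinuousOn g (Icc a b)) (hz : z ∈ Icc a b) (hgz : g z = 0) :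
    ∃ u ∈ Icc a b, g u = 0 ∧ ∀ s ∈ Ioc u b, g s ≠ 0 := by
  have hclosed : IsClosed (Icc a b ∩ g ⁻¹' {0}) :=
    hg.preimage_isClosed_of_isClosed isClosed_Icc isClosed_singleton
  obtain ⟨u, ⟨hu, hgu⟩, hmax⟩ :=
    (isCompact_Icc.of_isClosed_subset hclosed inter_subset_left).exists_isGreatest ⟨z, hz, hgz⟩
  refine ⟨u, hu, hgu, fun s hs hgs => ?_⟩
  have : s ≤ u := hmax ⟨⟨hu.1.trans hs.1.le, hs.2⟩, hgs⟩
  exact this.not_gt hs.1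

theorem le_max_sub_mul_of_hasDerivAt_le_neg {g g' : ℝ → ℝ} {c T : ℝ} (hc : 0 ≤ c) (hT : 0 ≤ T)
    (hg_nonneg : ∀ t, 0 ≤ t → 0 ≤ g t) (hg : ContinuousOn g (Ici 0))
    (hderiv : ∀ t, 0 ≤ t → 0 < g t → HasDerivAt g (g' t) t)
    (hle : ∀ t, 0 ≤ t → 0 < g t → g' t ≤ -c) :
    g T ≤ max (g 0 - c * T) 0 := by
  have hgT : ContinuousOn g (Icc 0 T) := hg.mono Icc_subset_Ici_self
  have decay_from (a : ℝ) (ha : a ∈ Icc 0 T) (hpos : ∀ s ∈ Ioo a T, g s ≠ 0) :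
      g T ≤ g a - c * (T - a) := by
    have hpos' (s : ℝ) (hs : s ∈ Ioo a T) : 0 ≤ s ∧ 0 < g s :=
      have hs0 : 0 ≤ s := ha.1.trans hs.1.le
      ⟨hs0, (hg_nonneg s hs0).lt_of_ne' (hpos s hs)⟩
    exact le_sub_mul_of_hasDerivAt_le_neg ha.2 (hgT.mono (Icc_subset_Icc_left ha.1))
      (fun s hs => hderiv s (hpos' s hs).1 (hpos' s hs).2)
      (fun s hs => hle s (hpos' s hs).1 (hpos' s hs).2)
  by_cases hzero : ∃ z ∈ Icc 0 T, g z = 0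
  · obtain ⟨z, hz, hgz⟩ := hzero
    obtain ⟨u, hu, hgu, hne⟩ := hgT.exists_last_zero_Icc hz hgz
    have hdecay := decay_from u hu fun s hs => hne s ⟨hs.1, hs.2.le⟩
    have : 0 ≤ c * (T - u) := mul_nonneg hc (sub_nonneg.2 hu.2)
    exact le_max_of_le_right (by linarith)
  · push Not at hzero
    have hdecay := decay_from 0 ⟨le_rfl, hT⟩ fun s hs => hzero s ⟨hs.1.le, hs.2.le⟩
    exact le_max_of_le_left (by simpa using hdecay)

theorem mul_rpow_sub_one_le_of_le_neg_mul_rpow {x d k p : ℝ} (hx : 0 < x) (hp : 0 ≤ p)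
    (hd : d ≤ -k * x ^ (1 - p)) :
    d * p * x ^ (p - 1) ≤ -(k * p) :=
  calc d * p * x ^ (p - 1) ≤ -k * x ^ (1 - p) * p * x ^ (p - 1) := by gcongr
    _ = -(k * p) * (x ^ (1 - p) * x ^ (p - 1)) := by ring
    _ = -(k * p) := by rw [← Real.rpow_add hx]; simp

theorem comparison_ode_general (γ ε : ℝ) (hγ : 0 < γ) (hε1 : ε < 1)
    (f f' : ℝ → ℝ) (hf_nonneg : ∀ t, 0 ≤ t → 0 ≤ f t)
    (hf_cont : ContinuousOn f (Set.Ici 0))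
    (hf_deriv : ∀ t, 0 ≤ t → 0 < f t → HasDerivAt f (f' t) t)
    (hf_ineq : ∀ t, 0 ≤ t → 0 < f t → f' t ≤ -2 * γ * f t ^ ((1 + ε) / 2)) :
    (∀ t, 0 ≤ t →
        f t ≤ (max (f 0 ^ ((1 - ε) / 2) - γ * (1 - ε) * t) 0) ^ (2 / (1 - ε))) ∧
      ∀ t, f 0 ^ ((1 - ε) / 2) / (γ * (1 - ε)) ≤ t → f t = 0 := by
  have hp : 0 < (1 - ε) / 2 := by linarith
  have hc : 0 < γ * (1 - ε) := by nlinarith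
  have hpos (t : ℝ) (ht : 0 ≤ t) (hgt : 0 < f t ^ ((1 - ε) / 2)) : 0 < f t :=
    (hf_nonneg t ht).lt_of_ne' fun h => by simp [h, hp.ne'] at hgt
  have bound (t : ℝ) (ht : 0 ≤ t) :
      f t ≤ (max (f 0 ^ ((1 - ε) / 2) - γ * (1 - ε) * t) 0) ^ (2 / (1 - ε)) := by
    have hdecay := le_max_sub_mul_of_hasDerivAt_le_neg hc.le ht
      (fun t ht => Real.rpow_nonneg (hf_nonneg t ht) _)
      (hf_cont.rpow_const fun _ _ => Or.inr hp.le)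
      (fun t ht hgt => (hf_deriv t ht (hpos t ht hgt)).rpow_const (Or.inl (hpos t ht hgt).ne'))
      (fun t ht hgt => (mul_rpow_sub_one_le_of_le_neg_mul_rpow (k := 2 * γ) (hpos t ht hgt) hp.le
        ((hf_ineq t ht (hpos t ht hgt)).trans_eq (by ring_nf))).trans_eq (by ring))
    calc f t = (f t ^ ((1 - ε) / 2)) ^ ((1 - ε) / 2)⁻¹ :=
          (Real.rpow_rpow_inv (hf_nonneg t ht) hp.ne').symm
      _ ≤ _ := by
        rw [inv_div]
        exact Real.rpow_le_rpow (Real.rpow_nonneg (hf_nonneg t ht) _) hdecay (by positivity)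
  refine ⟨bound, fun t ht => ?_⟩
  rw [div_le_iff₀ hc] at ht
  have ht0 : 0 ≤ t := nonneg_of_mul_nonneg_left
    ((Real.rpow_nonneg (hf_nonneg 0 le_rfl) _).trans ht) hc
  have hmax : max (f 0 ^ ((1 - ε) / 2) - γ * (1 - ε) * t) 0 = 0 := max_eq_right (by linarith)
  have := bound t ht0
  rw [hmax, Real.zero_rpow (by positivity)] at this
  exact this.antisymm (hf_nonneg t ht0)

/-- Comparison lemma: if `f ≥ 0` is continuous on `[0,∞)`, differentiable where positive with
`f' t ≤ -2γ f(t)^((1+ε)/2)`, then `f t ≤ (max (f 0 ^((1-ε)/2) - γ(1-ε)t) 0)^(2/(1-ε))`;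
in particular `f t = 0` for `t ≥ f 0 ^((1-ε)/2) / (γ(1-ε))`. -/
theorem comparison_ode (γ ε : ℝ) (hγ : 0 < γ) (hε0 : 0 < ε) (hε1 : ε < 1)
    (f f' : ℝ → ℝ) (hf_nonneg : ∀ t, 0 ≤ t → 0 ≤ f t)
    (hf_cont : ContinuousOn f (Set.Ici 0))
    (hf_deriv : ∀ t, 0 ≤ t → 0 < f t → HasDerivAt f (f' t) t)
    (hf_ineq : ∀ t, 0 ≤ t → 0 < f t → f' t ≤ -2 * γ * f t ^ ((1 + ε) / 2)) :
    (∀ t, 0 ≤ t →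
        f t ≤ (max (f 0 ^ ((1 - ε) / 2) - γ * (1 - ε) * t) 0) ^ (2 / (1 - ε))) ∧
      ∀ t, f 0 ^ ((1 - ε) / 2) / (γ * (1 - ε)) ≤ t → f t = 0 :=
  comparison_ode_general γ ε hγ hε1 f f' hf_nonneg hf_cont hf_deriv hf_ineq
end

section
/- For real numbers r > 0, T > r, L > 0, a ≥ 0, b > 0, the infimum ρ_T²(a,b) := inf_{s ∈ (r,T]} ( a²/(s−r) + s L² b² ) equals a²/(T−r) + T L² b² if T ≤ r + a/(L b), and equals 2 L a b + r L² b² if T ≥ r + a/(L b). -/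
/-!
With `c = L b` and `t = s - r`, the objective is `a²/t + t c² + r c²`. By AM-GM,
`a²/t + t c² ≥ 2 a c`, with equality at `t = a/c`, and the objective decreases on `(0, a/c]`.
So if `T - r ≤ a/c` the infimum is attained at the right endpoint `s = T`, and otherwise at
`s = r + a/c`; when `a = 0` this point is the excluded endpoint `r`, and the infimum `r c²` is
only approached.
-/

open Set

section HarnackExponent

variable {r a c : ℝ}

theorem two_mul_mul_add_mul_sq_le {s : ℝ} (hs : r < s) :
    2 * a * c + r * c ^ 2 ≤ a ^ 2 / (s - r) + s * c ^ 2 := by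
  have ht : 0 < s - r := sub_pos.2 hs
  have hid : a ^ 2 / (s - r) + s * c ^ 2 - (2 * a * c + r * c ^ 2)
      = (a - (s - r) * c) ^ 2 / (s - r) := by
    field_simp
    ring
  have : 0 ≤ (a - (s - r) * c) ^ 2 / (s - r) := by positivity
  linarith

theorem sq_div_sub_add_mul_sq_antitoneOn (ha : 0 ≤ a) (hc : 0 < c) :
    AntitoneOn (fun s => a ^ 2 / (s - r) + s * c ^ 2) (Ioc r (r + a / c)) := by
  rintro s ⟨hrs, -⟩ t ⟨hrt, hta⟩ hst
  have hs : 0 < s - r := sub_pos.2 hrs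
  have ht : 0 < t - r := sub_pos.2 hrt
  have htc : (t - r) * c ≤ a := by rw [← le_div_iff₀ hc]; linarith
  have hprod : (s - r) * (t - r) * c ^ 2 ≤ a ^ 2 := by
    have hsc : (s - r) * c ≤ (t - r) * c := by gcongr
    calc (s - r) * (t - r) * c ^ 2 = ((s - r) * c) * ((t - r) * c) := by ring
      _ ≤ a * a := mul_le_mul (hsc.trans htc) htc (by positivity) ha
      _ = a ^ 2 := (sq a).symm
  have hid : a ^ 2 / (s - r) + s * c ^ 2 - (a ^ 2 / (t - r) + t * c ^ 2)
      = (t - s) * (a ^ 2 - (s - r) * (t - r) * c ^ 2) / ((s - r) * (t - r)) := by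
    field_simp
    ring
  have : 0 ≤ (t - s) * (a ^ 2 - (s - r) * (t - r) * c ^ 2) / ((s - r) * (t - r)) :=
    div_nonneg (mul_nonneg (by linarith) (by linarith)) (by positivity)
  linarith

theorem sq_div_sub_add_mul_sq_at_optimum (hc : c ≠ 0) :
    a ^ 2 / (r + a / c - r) + (r + a / c) * c ^ 2 = 2 * a * c + r * c ^ 2 := by
  rcases eq_or_ne a 0 with rfl | ha
  · simp
  · rw [add_sub_cancel_left]
    field_simp
    ring

end HarnackExponent

theorem rho_explicit_general (r T L a b : ℝ) (hT : r < T) (hL : 0 < L)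
    (ha : 0 ≤ a) (hb : 0 < b) :
    (T ≤ r + a / (L * b) →
        sInf ((fun s => a ^ 2 / (s - r) + s * L ^ 2 * b ^ 2) '' Set.Ioc r T) =
          a ^ 2 / (T - r) + T * L ^ 2 * b ^ 2) ∧
      (r + a / (L * b) ≤ T →
        sInf ((fun s => a ^ 2 / (s - r) + s * L ^ 2 * b ^ 2) '' Set.Ioc r T) =
          2 * L * a * b + r * L ^ 2 * b ^ 2) := by
  set c := L * b
  have hc : 0 < c := mul_pos hL hb
  have hf : (fun s => a ^ 2 / (s - r) + s * L ^ 2 * b ^ 2)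
      = fun s => a ^ 2 / (s - r) + s * c ^ 2 := by
    ext s; ring
  have hTc : T * L ^ 2 * b ^ 2 = T * c ^ 2 := by ring
  have hopt : 2 * L * a * b + r * L ^ 2 * b ^ 2 = 2 * a * c + r * c ^ 2 := by ring
  rw [hf, hTc, hopt]
  refine ⟨fun hTa => ?_, fun hTa => ?_⟩
  · refine IsLeast.csInf_eq ⟨mem_image_of_mem _ ⟨hT, le_rfl⟩, ?_⟩
    rintro _ ⟨s, ⟨hrs, hsT⟩, rfl⟩
    exact sq_div_sub_add_mul_sq_antitoneOn ha hc ⟨hrs, hsT.trans hTa⟩ ⟨hT, hTa⟩ hsT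
  rcases ha.eq_or_lt with rfl | ha
  · have hmono : Monotone fun s : ℝ => s * c ^ 2 := monotone_mul_right_of_nonneg (sq_nonneg c)
    have := hmono.map_csInf_of_continuousAt (by fun_prop) (nonempty_Ioc.2 hT) bddBelow_Ioc
    simpa [(isGLB_Ioc hT).csInf_eq (nonempty_Ioc.2 hT)] using this.symm
  · refine IsLeast.csInf_eq ⟨⟨r + a / c, ⟨by simpa using div_pos ha hc, hTa⟩,
      sq_div_sub_add_mul_sq_at_optimum hc.ne'⟩, ?_⟩
    rintro _ ⟨s, ⟨hrs, -⟩, rfl⟩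
    exact two_mul_mul_add_mul_sq_le hrs

/-- Explicit computation of the Harnack exponent
`ρ_T²(a,b) = inf_{s ∈ (r,T]} (a²/(s-r) + s L² b²)`. -/
theorem rho_explicit (r T L a b : ℝ) (hr : 0 < r) (hT : r < T) (hL : 0 < L)
    (ha : 0 ≤ a) (hb : 0 < b) :
    (T ≤ r + a / (L * b) →
        sInf ((fun s => a ^ 2 / (s - r) + s * L ^ 2 * b ^ 2) '' Set.Ioc r T) =
          a ^ 2 / (T - r) + T * L ^ 2 * b ^ 2) ∧
      (r + a / (L * b) ≤ T →
        sInf ((fun s => a ^ 2 / (s - r) + s * L ^ 2 * b ^ 2) '' Set.Ioc r T) =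
          2 * L * a * b + r * L ^ 2 * b ^ 2) :=
  rho_explicit_general r T L a b hT hL ha hb
end

section
/- Let v : ℝ^d → ℝ^d be dissipative (⟨v(a)−v(b), a−b⟩ ≤ 0 for all a, b) and H as above with γ > 0. Suppose X, Ỹ : [0,∞) → ℝ^d are continuous semimartingales with the same martingale part, satisfying dX(t) = v(X(t))dt + Z(X_t)dt + dW(t) and dỸ(t) = v(Ỹ(t))dt + Z(X_t)dt − γ H(Ỹ(t)−X(t))dt + dW(t). Then R(t) := X(t) − Ỹ(t) satisfies d|R(t)|²/dt ≤ −2γ |R(t)|^{1+ε} for almost every t ≥ 0; in particular t ↦ |R(t)| is nonincreasing. -/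
/-
For `R = X − Ỹ`, `d‖R‖²/dt = 2⟪R, R'⟫`, and in `⟪R, R'⟫ = ⟪v X − v Ỹ, X − Ỹ⟫ + γ⟪H(−R), R⟫`
the first term is `≤ 0` by dissipativity while the second is `−γ‖R‖^{1+ε}`, because
`⟪H x, x⟫ = ‖x‖^{1+ε}`. Monotonicity of `‖R‖` follows from that of `‖R‖²`.
-/

open scoped RealInnerProductSpace

section

variable {E : Type*} [NormedAddCommGroup E]

theorem antitoneOn_norm_of_hasDerivAt_norm_sq {D : Set ℝ} (hD : Convex ℝ D) {f : ℝ → E}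
    {f' : ℝ → ℝ} (hf : ∀ t ∈ D, HasDerivAt (fun u => ‖f u‖ ^ 2) (f' t) t)
    (hf' : ∀ t ∈ D, f' t ≤ 0) : AntitoneOn (fun t => ‖f t‖) D := by
  have hsq : AntitoneOn (fun t => ‖f t‖ ^ 2) D :=
    antitoneOn_of_hasDerivWithinAt_nonpos hD
      (fun t ht => (hf t ht).continuousAt.continuousWithinAt)
      (fun t ht => (hf t (interior_subset ht)).hasDerivWithinAt)
      (fun t ht => hf' t (interior_subset ht))
  exact fun s hs t ht hst => (sq_le_sq₀ (norm_nonneg _) (norm_nonneg _)).mp (hsq hs ht hst)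

variable [InnerProductSpace ℝ E]

theorem inner_self_eq_rpow_of_eq_rpow_smul {ε : ℝ} (hε : 1 + ε ≠ 0) {H : E → E}
    (hH : ∀ x, x ≠ 0 → H x = ‖x‖ ^ (ε - 1) • x) (hH0 : H 0 = 0) (x : E) :
    ⟪H x, x⟫ = ‖x‖ ^ (1 + ε) := by
  rcases eq_or_ne x 0 with rfl | hx
  · rw [hH0, inner_zero_left, norm_zero, Real.zero_rpow hε]
  · have hpos : 0 < ‖x‖ := norm_pos_iff.mpr hx
    rw [hH x hx, real_inner_smul_left, real_inner_self_eq_norm_sq, ← Real.rpow_natCast,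
      ← Real.rpow_add hpos]
    congr 1
    push_cast
    ring

theorem inner_dissipative_add_smul_le {ε γ : ℝ} {v : E → E}
    (hv : ∀ a b, ⟪v a - v b, a - b⟫ ≤ 0) {H : E → E} (hH : ∀ x, ⟪H x, x⟫ = ‖x‖ ^ (1 + ε))
    (a b : E) : ⟪v a - v b + γ • H (b - a), a - b⟫ ≤ -γ * ‖a - b‖ ^ (1 + ε) := by
  have hHneg : ⟪H (b - a), a - b⟫ = -‖a - b‖ ^ (1 + ε) := by
    rw [← neg_sub b a, inner_neg_right, hH, norm_neg, norm_sub_rev]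
  rw [inner_add_left, real_inner_smul_left, hHneg]
  linarith [hv a b]

end

theorem coupling_decay_general {d : ℕ} (ε γ : ℝ) (hε0 : 0 < ε) (hγ : 0 < γ)
    (v : EuclideanSpace ℝ (Fin d) → EuclideanSpace ℝ (Fin d))
    (hv : ∀ a b, (inner ℝ (v a - v b) (a - b) : ℝ) ≤ 0)
    (H : EuclideanSpace ℝ (Fin d) → EuclideanSpace ℝ (Fin d))
    (hH : ∀ x, x ≠ 0 → H x = (‖x‖ ^ (ε - 1)) • x) (hH0 : H 0 = 0)
    (X Y : ℝ → EuclideanSpace ℝ (Fin d))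
    (hR : ∀ t, 0 ≤ t →
      HasDerivAt (fun u => X u - Y u) (v (X t) - v (Y t) + γ • H (Y t - X t)) t) :
    (∀ t, 0 ≤ t → ∃ D : ℝ, HasDerivAt (fun u => ‖X u - Y u‖ ^ 2) D t ∧
        D ≤ -2 * γ * ‖X t - Y t‖ ^ (1 + ε)) ∧
      AntitoneOn (fun t => ‖X t - Y t‖) (Set.Ici 0) := by
  have hHx : ∀ x, ⟪H x, x⟫ = ‖x‖ ^ (1 + ε) :=
    inner_self_eq_rpow_of_eq_rpow_smul (by linarith) hH hH0
  have hderiv : ∀ t ∈ Set.Ici (0 : ℝ), HasDerivAt (fun u => ‖X u - Y u‖ ^ 2)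
      (2 * ⟪X t - Y t, v (X t) - v (Y t) + γ • H (Y t - X t)⟫) t :=
    fun t ht => (hR t ht).norm_sq
  have hbound : ∀ t, 2 * ⟪X t - Y t, v (X t) - v (Y t) + γ • H (Y t - X t)⟫ ≤
      -2 * γ * ‖X t - Y t‖ ^ (1 + ε) := fun t => by
    rw [real_inner_comm]
    linarith [inner_dissipative_add_smul_le (γ := γ) hv hHx (X t) (Y t)]
  refine ⟨fun t ht => ⟨_, hderiv t ht, hbound t⟩,
    antitoneOn_norm_of_hasDerivAt_norm_sq (convex_Ici 0) hderiv fun t _ => ?_⟩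
  have : 0 ≤ γ * ‖X t - Y t‖ ^ (1 + ε) := by positivity
  linarith [hbound t]

/-- Pathwise coupling estimate: since both equations are driven by the same noise, the
difference `R = X − Ỹ` solves the ODE `R'(t) = v(X t) − v(Ỹ t) + γ H(Ỹ t − X t)`.
If `v` is dissipative, then `d‖R‖²/dt ≤ −2γ ‖R‖^{1+ε}`, and `t ↦ ‖R t‖` is nonincreasing
on `[0,∞)`. -/
theorem coupling_decay {d : ℕ} (ε γ : ℝ) (hε0 : 0 < ε) (hε1 : ε < 1) (hγ : 0 < γ)
    (v : EuclideanSpace ℝ (Fin d) → EuclideanSpace ℝ (Fin d))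
    (hv : ∀ a b, (inner ℝ (v a - v b) (a - b) : ℝ) ≤ 0)
    (H : EuclideanSpace ℝ (Fin d) → EuclideanSpace ℝ (Fin d))
    (hH : ∀ x, x ≠ 0 → H x = (‖x‖ ^ (ε - 1)) • x) (hH0 : H 0 = 0)
    (X Y : ℝ → EuclideanSpace ℝ (Fin d))
    (hR : ∀ t, 0 ≤ t →
      HasDerivAt (fun u => X u - Y u) (v (X t) - v (Y t) + γ • H (Y t - X t)) t) :
    (∀ t, 0 ≤ t → ∃ D : ℝ, HasDerivAt (fun u => ‖X u - Y u‖ ^ 2) D t ∧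
        D ≤ -2 * γ * ‖X t - Y t‖ ^ (1 + ε)) ∧
      AntitoneOn (fun t => ‖X t - Y t‖) (Set.Ici 0) :=
  coupling_decay_general ε γ hε0 hγ v hv H hH hH0 X Y hR
end

section
/- With ζ(t) = γ_s H(Ỹ(t) − X(t)) − (Z(X_t) − Z(Ỹ_t)) for t ∈ [0,s] and ζ = 0 on (s,T], where γ_s = |R(0)|^{1−ε}/((s−r)(1−ε)), and under the bounds |R(t)|² ≤ (max(|R(0)|^{1−ε} − γ_s(1−ε)t, 0))^{2/(1−ε)}, |Z(X_t) − Z(Ỹ_t)| ≤ L‖R_t‖, and ‖R_t‖ ≤ ‖R_0‖ for the segment sup-norms (by monotonicity of |R(·)| on [0,∞) and R_0 = x − y), it holds that (1/2)∫₀^T |ζ(u)|² du ≤ |R(0)|²/((1−ε²)(s−r)) + L² s ‖R_0‖². -/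
/-!
On `[0,s]` split `‖ζ‖² ≤ 2 γ_s² ‖R‖^{2ε} + 2 L² ‖R_0‖²`. The decay bound dominates `‖R u‖^{2ε}` by
`(a - b u)₊^{2ε/(1-ε)}` with `a = ‖R 0‖^{1-ε}` and `b = γ_s (1-ε) = a/(s-r)`; this profile vanishes
after time `s - r`, and its integral times `γ_s²` is exactly `‖R 0‖²/((1-ε²)(s-r))`.
-/

open MeasureTheory Set

lemma integral_max_sub_mul_rpow {a b q s : ℝ} (ha : 0 ≤ a) (hb : 0 < b) (hq : 0 < q)
    (hs : a / b ≤ s) :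
    ∫ u in (0:ℝ)..s, max (a - b * u) 0 ^ q = a ^ (q + 1) / (b * (q + 1)) := by
  have hab : 0 ≤ a / b := div_nonneg ha hb.le
  have hcont : Continuous fun u : ℝ => max (a - b * u) 0 ^ q :=
    (by fun_prop : Continuous fun u : ℝ => max (a - b * u) 0).rpow_const fun _ => Or.inr hq.le
  have head : ∫ u in (0:ℝ)..a / b, max (a - b * u) 0 ^ q =
      ∫ u in (0:ℝ)..a / b, (a - b * u) ^ q := by
    refine intervalIntegral.integral_congr fun u hu => ?_
    rw [uIcc_of_le hab] at hu
    rw [max_eq_left (sub_nonneg.2 ((le_div_iff₀' hb).1 hu.2))]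
  have tail : ∫ u in a / b..s, max (a - b * u) 0 ^ q = 0 := by
    rw [intervalIntegral.integral_congr (g := fun _ => 0) fun u hu => ?_,
      intervalIntegral.integral_zero]
    rw [uIcc_of_le hs] at hu
    rw [max_eq_right (sub_nonpos.2 ((div_le_iff₀' hb).1 hu.1)), Real.zero_rpow hq.ne']
  rw [← intervalIntegral.integral_add_adjacent_intervals (hcont.intervalIntegrable 0 (a / b))
    (hcont.intervalIntegrable _ _), head, tail, add_zero,
    intervalIntegral.integral_comp_sub_mul (fun x => x ^ q) hb.ne', mul_zero, sub_zero,
    mul_div_cancel₀ _ hb.ne', sub_self, integral_rpow (Or.inl (by linarith)),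
    Real.zero_rpow (by linarith : q + 1 ≠ 0), sub_zero, smul_eq_mul]
  field_simp

lemma sq_mul_integral_decay_profile {ρ ε c s γ : ℝ} (hρ : 0 ≤ ρ) (hε0 : 0 < ε) (hε1 : ε < 1)
    (hc : 0 < c) (hcs : c ≤ s) (hγ : γ = ρ ^ (1 - ε) / (c * (1 - ε))) :
    γ ^ 2 * ∫ u in (0:ℝ)..s, max (ρ ^ (1 - ε) - γ * (1 - ε) * u) 0 ^ (2 * ε / (1 - ε)) =
      ρ ^ 2 / ((1 - ε ^ 2) * c) := by
  have hε : 0 < 1 - ε := by linarith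
  have hε2 : 0 < 1 - ε ^ 2 := by nlinarith
  rcases hρ.eq_or_lt with rfl | hρ
  · simp [hγ, Real.zero_rpow hε.ne']
  have ha : 0 < ρ ^ (1 - ε) := Real.rpow_pos_of_pos hρ _
  have hb : γ * (1 - ε) = ρ ^ (1 - ε) / c := by rw [hγ]; field_simp
  have hq : 2 * ε / (1 - ε) + 1 = (1 + ε) / (1 - ε) := by field_simp; ring
  have hpow : ρ ^ (1 - ε) * (ρ ^ (1 - ε)) ^ ((1 + ε) / (1 - ε)) = ρ ^ 2 := by
    rw [← Real.rpow_mul hρ.le, mul_div_cancel₀ _ hε.ne', ← Real.rpow_add hρ]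
    norm_num
  rw [hb, integral_max_sub_mul_rpow ha.le (div_pos ha hc) (by positivity)
    (by rwa [div_div_cancel₀ ha.ne']), hq, ← hpow, hγ]
  field_simp
  ring

lemma rpow_two_mul_le_of_sq_le_rpow {x y p ε : ℝ} (hx : 0 ≤ x) (hy : 0 ≤ y) (hε : 0 ≤ ε)
    (h : x ^ 2 ≤ y ^ p) : x ^ (2 * ε) ≤ y ^ (p * ε) := by
  rw [Real.rpow_mul hx, Real.rpow_mul hy, Real.rpow_two]
  exact Real.rpow_le_rpow (by positivity) h hε

lemma sq_le_of_le_mul_rpow_add_mul {z x n n₀ γ L ε : ℝ} (hz : 0 ≤ z) (hx : 0 ≤ x) (hn : 0 ≤ n)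
    (hn₀ : n ≤ n₀) (h : z ≤ γ * x ^ ε + L * n) :
    z ^ 2 ≤ 2 * (γ ^ 2 * x ^ (2 * ε)) + 2 * (L ^ 2 * n₀ ^ 2) := by
  have hx2 : (x ^ ε) ^ 2 = x ^ (2 * ε) := by
    rw [← Real.rpow_mul_natCast hx, Nat.cast_ofNat, mul_comm]
  calc z ^ 2 ≤ (γ * x ^ ε + L * n) ^ 2 := pow_le_pow_left₀ hz h 2
    _ ≤ 2 * ((γ * x ^ ε) ^ 2 + (L * n) ^ 2) := add_sq_le
    _ ≤ 2 * (γ ^ 2 * x ^ (2 * ε)) + 2 * (L ^ 2 * n₀ ^ 2) := by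
      rw [mul_pow, mul_pow, hx2]
      have : n ^ 2 ≤ n₀ ^ 2 := pow_le_pow_left₀ hn hn₀ 2
      nlinarith [sq_nonneg L]

lemma intervalIntegral_le_of_le_of_eq_zero {f g : ℝ → ℝ} {s T : ℝ} (hs : 0 ≤ s) (hsT : s ≤ T)
    (hg : IntervalIntegrable g volume 0 s) (hf0 : ∀ u, 0 ≤ f u)
    (hfg : ∀ u ∈ Icc 0 s, f u ≤ g u) (hf : ∀ u ∈ Ioc s T, f u = 0) :
    ∫ u in (0:ℝ)..T, f u ≤ ∫ u in (0:ℝ)..s, g u := by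
  have hrestrict : (volume.restrict (Ioc 0 T)).restrict (Iic s) = volume.restrict (Ioc 0 s) := by
    rw [Measure.restrict_restrict measurableSet_Iic, inter_comm, Ioc_inter_Iic, min_eq_right hsT]
  rw [intervalIntegral.integral_of_le (hs.trans hsT), intervalIntegral.integral_of_le hs,
    ← hrestrict, ← integral_indicator measurableSet_Iic]
  refine integral_mono_of_nonneg (Filter.Eventually.of_forall hf0) ?_ ?_
  · rw [integrable_indicator_iff measurableSet_Iic, IntegrableOn, hrestrict]
    exact hg.1
  · filter_upwards [ae_restrict_mem measurableSet_Ioc] with u hu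
    by_cases hus : u ≤ s
    · rw [Set.indicator_of_mem (show u ∈ Iic s from hus)]
      exact hfg u ⟨hu.1.le, hus⟩
    · rw [Set.indicator_of_notMem (show u ∉ Iic s from hus), hf u ⟨not_le.1 hus, hu.2⟩]

theorem girsanov_drift_estimate_general {d : ℕ} (r T s ε L γs : ℝ)
    (hr : 0 < r) (hs : s ∈ Set.Ioc r T) (hε0 : 0 < ε) (hε1 : ε < 1)
    (R : ℝ → EuclideanSpace ℝ (Fin d))
    (N : ℝ → ℝ) (hN : ∀ t, N t = sSup ((fun u => ‖R (t + u)‖) '' Set.Icc (-r) 0))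
    (hγs : γs = ‖R 0‖ ^ (1 - ε) / ((s - r) * (1 - ε)))
    (ζ : ℝ → EuclideanSpace ℝ (Fin d))
    (hζ_bdd : ∀ t ∈ Set.Icc (0:ℝ) s, ‖ζ t‖ ≤ γs * ‖R t‖ ^ ε + L * N t)
    (hζ_zero : ∀ t ∈ Set.Ioc s T, ζ t = 0)
    (hR_decay : ∀ t, 0 ≤ t →
      ‖R t‖ ^ 2 ≤ (max (‖R 0‖ ^ (1 - ε) - γs * (1 - ε) * t) 0) ^ (2 / (1 - ε)))
    (hN_mono : ∀ t, 0 ≤ t → N t ≤ N 0) :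
    (1 / 2) * ∫ u in (0:ℝ)..T, ‖ζ u‖ ^ 2 ≤
      ‖R 0‖ ^ 2 / ((1 - ε ^ 2) * (s - r)) + L ^ 2 * s * N 0 ^ 2 := by
  obtain ⟨hrs, hsT⟩ := hs
  have hN_nonneg : ∀ t, 0 ≤ N t := fun t =>
    (hN t).symm ▸ Real.sSup_nonneg (by rintro _ ⟨u, -, rfl⟩; exact norm_nonneg _)
  set M : ℝ → ℝ := fun u => max (‖R 0‖ ^ (1 - ε) - γs * (1 - ε) * u) 0 ^ (2 * ε / (1 - ε))
  have hM : Continuous M := by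
    refine Continuous.rpow_const (by fun_prop) fun _ => Or.inr ?_
    have : 0 < 1 - ε := by linarith
    positivity
  have hζ_sq : ∀ u ∈ Icc 0 s, ‖ζ u‖ ^ 2 ≤ 2 * (γs ^ 2 * M u) + 2 * (L ^ 2 * N 0 ^ 2) := by
    intro u hu
    have hRM : ‖R u‖ ^ (2 * ε) ≤ M u := by
      simpa only [div_mul_eq_mul_div] using rpow_two_mul_le_of_sq_le_rpow (norm_nonneg _)
        (le_max_right _ _) hε0.le (hR_decay u hu.1)
    calc ‖ζ u‖ ^ 2 ≤ 2 * (γs ^ 2 * ‖R u‖ ^ (2 * ε)) + 2 * (L ^ 2 * N 0 ^ 2) :=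
          sq_le_of_le_mul_rpow_add_mul (norm_nonneg _) (norm_nonneg _) (hN_nonneg u)
            (hN_mono u hu.1) (hζ_bdd u hu)
      _ ≤ 2 * (γs ^ 2 * M u) + 2 * (L ^ 2 * N 0 ^ 2) := by gcongr
  calc (1 / 2) * ∫ u in (0:ℝ)..T, ‖ζ u‖ ^ 2
      ≤ (1 / 2) * ∫ u in (0:ℝ)..s, (2 * (γs ^ 2 * M u) + 2 * (L ^ 2 * N 0 ^ 2)) := by
        gcongr
        exact intervalIntegral_le_of_le_of_eq_zero (by linarith) hsT
          (Continuous.intervalIntegrable (by fun_prop) _ _)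
          (fun _ => by positivity) hζ_sq (fun u hu => by simp [hζ_zero u hu])
    _ = γs ^ 2 * (∫ u in (0:ℝ)..s, M u) + L ^ 2 * s * N 0 ^ 2 := by
        rw [intervalIntegral.integral_add ((hM.intervalIntegrable _ _).const_mul _ |>.const_mul _)
          intervalIntegrable_const, intervalIntegral.integral_const_mul,
          intervalIntegral.integral_const_mul, intervalIntegral.integral_const, smul_eq_mul]
        ring
    _ = ‖R 0‖ ^ 2 / ((1 - ε ^ 2) * (s - r)) + L ^ 2 * s * N 0 ^ 2 := by
        rw [sq_mul_integral_decay_profile (norm_nonneg _) hε0 hε1 (by linarith) (by linarith) hγs]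

/-- The Girsanov drift estimate (2.4): with `ζ` bounded on `[0,s]` by
`γ_s ‖R t‖^ε + L ‖R_t‖` (where `‖R_t‖` is the segment sup-norm `N t`), `ζ = 0` on `(s,T]`,
`γ_s = ‖R 0‖^{1−ε}/((s−r)(1−ε))`, the pathwise decay bound on `‖R‖²` and segment-norm
monotonicity, one gets `(1/2)∫₀^T ‖ζ‖² ≤ ‖R 0‖²/((1−ε²)(s−r)) + L² s ‖R_0‖²`. -/
theorem girsanov_drift_estimate {d : ℕ} (r T s ε L γs : ℝ)
    (hr : 0 < r) (hT : r < T) (hs : s ∈ Set.Ioc r T) (hε0 : 0 < ε) (hε1 : ε < 1)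
    (hL : 0 < L)
    (R : ℝ → EuclideanSpace ℝ (Fin d)) (hR_cont : Continuous R)
    (N : ℝ → ℝ) (hN : ∀ t, N t = sSup ((fun u => ‖R (t + u)‖) '' Set.Icc (-r) 0))
    (hγs : γs = ‖R 0‖ ^ (1 - ε) / ((s - r) * (1 - ε)))
    (ζ : ℝ → EuclideanSpace ℝ (Fin d)) (hζ_cont : Continuous ζ)
    (hζ_bdd : ∀ t ∈ Set.Icc (0:ℝ) s, ‖ζ t‖ ≤ γs * ‖R t‖ ^ ε + L * N t)
    (hζ_zero : ∀ t ∈ Set.Ioc s T, ζ t = 0)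
    (hR_decay : ∀ t, 0 ≤ t →
      ‖R t‖ ^ 2 ≤ (max (‖R 0‖ ^ (1 - ε) - γs * (1 - ε) * t) 0) ^ (2 / (1 - ε)))
    (hN_mono : ∀ t, 0 ≤ t → N t ≤ N 0) :
    (1 / 2) * ∫ u in (0:ℝ)..T, ‖ζ u‖ ^ 2 ≤
      ‖R 0‖ ^ 2 / ((1 - ε ^ 2) * (s - r)) + L ^ 2 * s * N 0 ^ 2 :=
  girsanov_drift_estimate_general r T s ε L γs hr hs hε0 hε1 R N hN hγs ζ hζ_bdd hζ_zero hR_decay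
    hN_mono
end

section
/- Let μ be a probability measure on a metric space C with ∫ exp(λ‖x‖²) μ(dx) < ∞ for some λ > 0, and suppose a semigroup P_t, for which μ is invariant, satisfies the Harnack inequality (P_t f(y))^p ≤ P_t(f^p)(x) exp((p/(p−1)) ρ²(x,y)) for all bounded measurable f ≥ 0, where ρ²(x,y) ≤ 2L|x(0)−y(0)|·‖x−y‖ + rL²‖x−y‖² and λ > 4(2L + rL²). Then, using the Harnack inequality with p = 2, P_t is a bounded operator from L²(C,μ) to L⁴(C,μ). -/
open MeasureTheory

set_option maxHeartbeats 1000000 in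
/-- Hyperboundedness (Corollary 1.4): if `μ` is an invariant probability measure with
`∫ exp(λ‖x‖²) dμ < ∞` for some `λ > 4(2L + rL²)` and the semigroup satisfies the Harnack
inequality with `p = 2` and exponent `ρ² ≤ 2L‖x(0)−y(0)‖‖x−y‖ + rL²‖x−y‖²`, then `P_t`
maps `L²(μ)` boundedly into `L⁴(μ)`: there is `K` with
`∫ (P_t f)⁴ dμ ≤ K (∫ f² dμ)²` for all bounded measurable `f ≥ 0`. -/
theorem hyperbounded {d : ℕ} (r L lam : ℝ) (hr : 0 < r) (hL : 0 < L)
    (hlam : 4 * (2 * L + r * L ^ 2) < lam)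
    [MeasurableSpace (C(Set.Icc (-r) (0:ℝ), EuclideanSpace ℝ (Fin d)))]
    [BorelSpace (C(Set.Icc (-r) (0:ℝ), EuclideanSpace ℝ (Fin d)))]
    (PT : (C(Set.Icc (-r) (0:ℝ), EuclideanSpace ℝ (Fin d)) → ℝ) →
      C(Set.Icc (-r) (0:ℝ), EuclideanSpace ℝ (Fin d)) → ℝ)
    (μ : Measure (C(Set.Icc (-r) (0:ℝ), EuclideanSpace ℝ (Fin d))))
    [IsProbabilityMeasure μ]
    (hint : Integrable (fun x => Real.exp (lam * ‖x‖ ^ 2)) μ)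
    (hinv : ∀ f : C(Set.Icc (-r) (0:ℝ), EuclideanSpace ℝ (Fin d)) → ℝ,
      Measurable f → (∀ z, 0 ≤ f z) → (∃ M, ∀ z, f z ≤ M) →
      ∫ x, PT f x ∂μ = ∫ x, f x ∂μ)
    (hharnack : ∀ f : C(Set.Icc (-r) (0:ℝ), EuclideanSpace ℝ (Fin d)) → ℝ,
      Measurable f → (∀ z, 0 ≤ f z) → (∃ M, ∀ z, f z ≤ M) →
      ∀ x y, (PT f y) ^ 2 ≤ PT (fun z => f z ^ 2) x * Real.exp (2 *
        (2 * L * ‖x ⟨0, Set.mem_Icc.mpr ⟨by linarith, le_refl 0⟩⟩ -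
            y ⟨0, Set.mem_Icc.mpr ⟨by linarith, le_refl 0⟩⟩‖ * ‖x - y‖ +
          r * L ^ 2 * ‖x - y‖ ^ 2))) :
    ∃ K : ℝ, ∀ f : C(Set.Icc (-r) (0:ℝ), EuclideanSpace ℝ (Fin d)) → ℝ,
      Measurable f → (∀ z, 0 ≤ f z) → (∃ M, ∀ z, f z ≤ M) →
      ∫ x, (PT f x) ^ 4 ∂μ ≤ K * (∫ x, (f x) ^ 2 ∂μ) ^ 2 := by
  have hb : (0:ℝ) < 2 * L + r * L ^ 2 := by positivity
  set b : ℝ := 2 * L + r * L ^ 2 with hbdef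
  set a : ℝ := 4 * b with hadef
  have ha : 0 < a := by positivity
  have hla : a < lam := hlam
  have hlam0 : 0 < lam := lt_trans ha hla
  -- PT of a nonneg bounded measurable function is nonneg
  have hPT0 : ∀ g : C(Set.Icc (-r) (0:ℝ), EuclideanSpace ℝ (Fin d)) → ℝ, Measurable g → (∀ z, 0 ≤ g z) → (∃ M, ∀ z, g z ≤ M) →
      ∀ x, 0 ≤ PT g x := by
    intro g hgm hg0 hgb x
    obtain ⟨M, hM⟩ := hgb
    have h := hharnack (fun z => Real.sqrt (g z)) hgm.sqrt
      (fun z => Real.sqrt_nonneg _) ⟨Real.sqrt M, fun z => Real.sqrt_le_sqrt (hM z)⟩ x x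
    have hsq : (fun z => Real.sqrt (g z) ^ 2) = g := funext fun z => Real.sq_sqrt (hg0 z)
    rw [hsq] at h
    norm_num at h
    exact le_trans (sq_nonneg _) h
  set E := ∫ x, Real.exp (lam * ‖x‖ ^ 2) ∂μ with hEdef
  have hE1 : 1 ≤ E := by
    have : (1:ℝ) = ∫ (_ : C(Set.Icc (-r) (0:ℝ), EuclideanSpace ℝ (Fin d))), (1:ℝ) ∂μ := by simp
    rw [this]
    exact integral_mono (integrable_const 1) hint
      (fun x => Real.one_le_exp (by positivity))
  have hnormMeas : Measurable fun x : C(Set.Icc (-r) (0:ℝ), EuclideanSpace ℝ (Fin d)) => Real.exp (lam * ‖x‖ ^ 2) :=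
    ((measurable_norm.pow_const 2).const_mul lam).exp
  set A : Set C(Set.Icc (-r) (0:ℝ), EuclideanSpace ℝ (Fin d)) := {x | Real.exp (lam * ‖x‖ ^ 2) < 2 * E} with hAdef
  have hAmeas : MeasurableSet A := measurableSet_lt hnormMeas measurable_const
  have hcompl : (μ Aᶜ).toReal ≤ 1 / 2 := by
    have hcheb := mul_meas_ge_le_integral_of_nonneg
      (μ := μ) (f := fun x : C(Set.Icc (-r) (0:ℝ), EuclideanSpace ℝ (Fin d)) => Real.exp (lam * ‖x‖ ^ 2))
      (ae_of_all μ fun x => (Real.exp_pos _).le) hint (2 * E)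
    have hset : {x : C(Set.Icc (-r) (0:ℝ), EuclideanSpace ℝ (Fin d)) | 2 * E ≤ Real.exp (lam * ‖x‖ ^ 2)} = Aᶜ := by
      ext x; simp [hAdef, not_lt]
    rw [hset] at hcheb
    nlinarith [ENNReal.toReal_nonneg (a := μ Aᶜ), show μ.real Aᶜ = (μ Aᶜ).toReal from rfl]
  have hmuA : 1 / 2 ≤ (μ A).toReal := by
    have hadd : μ A + μ Aᶜ = 1 := by
      rw [measure_add_measure_compl hAmeas, measure_univ]
    have h1 : (μ A).toReal + (μ Aᶜ).toReal = 1 := by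
      rw [← ENNReal.toReal_add (measure_ne_top μ A) (measure_ne_top μ Aᶜ), hadd]
      simp
    linarith
  set R := Real.sqrt (Real.log (2 * E) / lam) with hRdef
  have hR0 : 0 ≤ R := Real.sqrt_nonneg _
  have hAnorm : ∀ x ∈ A, ‖x‖ ≤ R := by
    intro x hx
    have hx' : Real.exp (lam * ‖x‖ ^ 2) < 2 * E := hx
    have hlog : lam * ‖x‖ ^ 2 < Real.log (2 * E) := by
      rw [← Real.exp_lt_exp, Real.exp_log (by linarith)]
      exact hx'
    have hsq : ‖x‖ ^ 2 ≤ Real.log (2 * E) / lam := by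
      rw [le_div_iff₀ hlam0]; nlinarith
    rw [hRdef]
    exact Real.le_sqrt_of_sq_le hsq
  set Cc : ℝ := a * R ^ 2 + a ^ 2 * R ^ 2 / (lam - a) with hCcdef
  have keyC : ∀ t : ℝ, 0 ≤ t → a * (R + t) ^ 2 ≤ lam * t ^ 2 + Cc := by
    intro t ht
    have hla' : 0 < lam - a := by linarith
    have hD : a ^ 2 * R ^ 2 / (lam - a) * (lam - a) = a ^ 2 * R ^ 2 :=
      div_mul_cancel₀ _ (ne_of_gt hla')
    rw [hCcdef]
    nlinarith [sq_nonneg ((lam - a) * t - a * R), hD]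
  refine ⟨4 * Real.exp Cc * E, ?_⟩
  intro f hf hf0 hfb
  set g : C(Set.Icc (-r) (0:ℝ), EuclideanSpace ℝ (Fin d)) → ℝ := fun z => f z ^ 2 with hgdef
  have hgm : Measurable g := hf.pow_const 2
  have hg0 : ∀ z, 0 ≤ g z := fun z => sq_nonneg _
  have hgb : ∃ M, ∀ z, g z ≤ M := by
    obtain ⟨M, hM⟩ := hfb
    exact ⟨M ^ 2, fun z => pow_le_pow_left₀ (hf0 z) (hM z) 2⟩
  have hPTg0 : ∀ x, 0 ≤ PT g x := hPT0 g hgm hg0 hgb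
  have hPTf0 : ∀ x, 0 ≤ PT f x := hPT0 f hf hf0 hfb
  have hIg0 : 0 ≤ ∫ x, g x ∂μ := integral_nonneg hg0
  have hK0 : (0:ℝ) ≤ 4 * Real.exp Cc * E := by positivity
  by_cases hPTgInt : Integrable (PT g) μ
  · -- main case
    have hinvg : ∫ x, PT g x ∂μ = ∫ x, g x ∂μ := hinv g hgm hg0 hgb
    have key : ∀ y, (PT f y) ^ 2 ≤ 2 * Real.exp (2 * b * (R + ‖y‖) ^ 2) * ∫ x, g x ∂μ := by
      intro y
      set e : ℝ := Real.exp (2 * b * (R + ‖y‖) ^ 2) with hedef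
      have he0 : 0 < e := Real.exp_pos _
      have hpt : ∀ x ∈ A, (PT f y) ^ 2 ≤ PT g x * e := by
        intro x hx
        refine le_trans (hharnack f hf hf0 hfb x y) ?_
        refine mul_le_mul_of_nonneg_left ?_ (hPTg0 x)
        rw [hedef]
        apply Real.exp_le_exp.mpr
        set p : Set.Icc (-r) (0:ℝ) := ⟨0, Set.mem_Icc.mpr ⟨by linarith, le_refl 0⟩⟩
        have h1 : ‖x p - y p‖ ≤ ‖x - y‖ := by
          rw [← ContinuousMap.sub_apply]
          exact ContinuousMap.norm_coe_le_norm (x - y) p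
        have h2 : ‖x - y‖ ≤ R + ‖y‖ := le_trans (norm_sub_le x y)
          (by linarith [hAnorm x hx])
        have h3 : (0:ℝ) ≤ ‖x p - y p‖ := norm_nonneg _
        have h4 : (0:ℝ) ≤ ‖x - y‖ := norm_nonneg _
        have h5 : (0:ℝ) ≤ R + ‖y‖ := by positivity
        rw [hbdef]
        have q1 : ‖x p - y p‖ * ‖x - y‖ ≤ (R + ‖y‖) ^ 2 := by nlinarith
        have q2 : ‖x - y‖ ^ 2 ≤ (R + ‖y‖) ^ 2 := by nlinarith
        nlinarith [mul_le_mul_of_nonneg_left q1 (by positivity : (0:ℝ) ≤ 2 * L),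
          mul_le_mul_of_nonneg_left q2 (by positivity : (0:ℝ) ≤ r * L ^ 2)]
      have hstep : (PT f y) ^ 2 * (μ A).toReal ≤ e * ∫ x, g x ∂μ := by
        have h6 : ∫ _ in A, (PT f y) ^ 2 ∂μ = (μ A).toReal • ((PT f y) ^ 2) :=
          setIntegral_const _
        have h7 : ∫ x in A, (PT f y) ^ 2 ∂μ ≤ ∫ x in A, PT g x * e ∂μ :=
          setIntegral_mono_on
            ((integrable_const _).integrableOn)
            (hPTgInt.mul_const e).integrableOn hAmeas hpt
        have h8 : ∫ x in A, PT g x * e ∂μ = (∫ x in A, PT g x ∂μ) * e :=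
          integral_mul_const e _
        have h9 : ∫ x in A, PT g x ∂μ ≤ ∫ x, PT g x ∂μ :=
          setIntegral_le_integral hPTgInt (ae_of_all μ hPTg0)
        have h10 : (∫ x in A, PT g x ∂μ) * e ≤ (∫ x, g x ∂μ) * e := by
          rw [← hinvg]
          exact mul_le_mul_of_nonneg_right h9 he0.le
        calc (PT f y) ^ 2 * (μ A).toReal = (μ A).toReal • ((PT f y) ^ 2) := by
              rw [smul_eq_mul]; ring
          _ = ∫ _ in A, (PT f y) ^ 2 ∂μ := h6.symm
          _ ≤ ∫ x in A, PT g x * e ∂μ := h7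
          _ = (∫ x in A, PT g x ∂μ) * e := h8
          _ ≤ (∫ x, g x ∂μ) * e := h10
          _ = e * ∫ x, g x ∂μ := by ring
      nlinarith [sq_nonneg (PT f y), mul_nonneg (mul_nonneg he0.le hIg0)
        (sq_nonneg (PT f y))]
    have key4 : ∀ y, (PT f y) ^ 4 ≤
        4 * Real.exp Cc * (∫ x, g x ∂μ) ^ 2 * Real.exp (lam * ‖y‖ ^ 2) := by
      intro y
      have h1 := key y
      have h2 : (PT f y) ^ 4 ≤ (2 * Real.exp (2 * b * (R + ‖y‖) ^ 2) * ∫ x, g x ∂μ) ^ 2 := by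
        have := pow_le_pow_left₀ (sq_nonneg (PT f y)) h1 2
        calc (PT f y) ^ 4 = ((PT f y) ^ 2) ^ 2 := by ring
          _ ≤ _ := this
      have h3 : (2 * Real.exp (2 * b * (R + ‖y‖) ^ 2) * ∫ x, g x ∂μ) ^ 2 =
          4 * Real.exp (a * (R + ‖y‖) ^ 2) * (∫ x, g x ∂μ) ^ 2 := by
        have : Real.exp (2 * b * (R + ‖y‖) ^ 2) ^ 2
            = Real.exp (a * (R + ‖y‖) ^ 2) := by
          rw [sq, ← Real.exp_add, hadef]; ring_nf
        calc (2 * Real.exp (2 * b * (R + ‖y‖) ^ 2) * ∫ x, g x ∂μ) ^ 2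
            = 4 * Real.exp (2 * b * (R + ‖y‖) ^ 2) ^ 2 * (∫ x, g x ∂μ) ^ 2 := by ring
          _ = 4 * Real.exp (a * (R + ‖y‖) ^ 2) * (∫ x, g x ∂μ) ^ 2 := by rw [this]
      have h4 : Real.exp (a * (R + ‖y‖) ^ 2) ≤ Real.exp Cc * Real.exp (lam * ‖y‖ ^ 2) := by
        rw [← Real.exp_add]
        apply Real.exp_le_exp.mpr
        have := keyC ‖y‖ (norm_nonneg y)
        linarith
      calc (PT f y) ^ 4 ≤ 4 * Real.exp (a * (R + ‖y‖) ^ 2) * (∫ x, g x ∂μ) ^ 2 := by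
            rw [← h3]; exact h2
        _ ≤ 4 * (Real.exp Cc * Real.exp (lam * ‖y‖ ^ 2)) * (∫ x, g x ∂μ) ^ 2 := by
            have h5 : (0:ℝ) ≤ (∫ x, g x ∂μ) ^ 2 := sq_nonneg _
            nlinarith [Real.exp_pos (a * (R + ‖y‖) ^ 2)]
        _ = 4 * Real.exp Cc * (∫ x, g x ∂μ) ^ 2 * Real.exp (lam * ‖y‖ ^ 2) := by ring
    have hdom : Integrable
        (fun y : C(Set.Icc (-r) (0:ℝ), EuclideanSpace ℝ (Fin d)) => 4 * Real.exp Cc * (∫ x, g x ∂μ) ^ 2 * Real.exp (lam * ‖y‖ ^ 2)) μ :=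
      hint.const_mul _
    calc ∫ y, (PT f y) ^ 4 ∂μ
        ≤ ∫ y, 4 * Real.exp Cc * (∫ x, g x ∂μ) ^ 2 * Real.exp (lam * ‖y‖ ^ 2) ∂μ :=
          integral_mono_of_nonneg (ae_of_all μ fun y => pow_nonneg (hPTf0 y) 4)
            hdom (ae_of_all μ key4)
      _ = 4 * Real.exp Cc * (∫ x, g x ∂μ) ^ 2 * E := by
          rw [integral_const_mul]
      _ = 4 * Real.exp Cc * E * (∫ x, g x ∂μ) ^ 2 := by ring
  · -- degenerate case: PT g not integrable, hence ∫ g = 0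
    have h0 : ∫ x, PT g x ∂μ = 0 := integral_undef hPTgInt
    have hg_int0 : ∫ x, g x ∂μ = 0 := by rw [← hinv g hgm hg0 hgb, h0]
    have hgint : Integrable g μ := by
      obtain ⟨M, hM⟩ := hgb
      exact (integrable_const M).mono' hgm.aestronglyMeasurable
        (ae_of_all _ fun z => by rw [Real.norm_of_nonneg (hg0 z)]; exact hM z)
    have hgae : g =ᵐ[μ] 0 := (integral_eq_zero_iff_of_nonneg hg0 hgint).mp hg_int0
    have hfae : f =ᵐ[μ] 0 := by
      filter_upwards [hgae] with z hz
      have hz' : f z ^ 2 = 0 := hz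
      exact sq_eq_zero_iff.mp hz'
    by_cases hI4 : Integrable (fun y => (PT f y) ^ 4) μ
    · have hmeasPTf : AEStronglyMeasurable (PT f) μ := by
        have heq : PT f = fun y => Real.sqrt (Real.sqrt ((PT f y) ^ 4)) := by
          funext y
          rw [show (PT f y) ^ 4 = ((PT f y) ^ 2) ^ 2 by ring,
            Real.sqrt_sq (sq_nonneg _), Real.sqrt_sq (hPTf0 y)]
        rw [heq]
        exact (Real.continuous_sqrt.comp_aestronglyMeasurable
          (Real.continuous_sqrt.comp_aestronglyMeasurable hI4.aestronglyMeasurable))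
      have hPTfInt : Integrable (PT f) μ := by
        refine Integrable.mono' ((integrable_const 1).add hI4) hmeasPTf
          (ae_of_all _ fun y => ?_)
        rw [Real.norm_of_nonneg (hPTf0 y)]
        simp only [Pi.add_apply]
        rcases le_total (PT f y) 1 with h | h
        · nlinarith [pow_nonneg (hPTf0 y) 4]
        · nlinarith [pow_le_pow_right₀ h (by norm_num : 1 ≤ 4)]
      have hint0 : ∫ y, PT f y ∂μ = 0 := by
        rw [hinv f hf hf0 hfb, integral_eq_zero_of_ae hfae]
      have hPTfae : PT f =ᵐ[μ] 0 :=
        (integral_eq_zero_iff_of_nonneg hPTf0 hPTfInt).mp hint0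
      have h4ae : (fun y => (PT f y) ^ 4) =ᵐ[μ] (fun _ => (0:ℝ)) := by
        filter_upwards [hPTfae] with y hy
        simp only [Pi.zero_apply] at hy
        simp [hy]
      rw [integral_congr_ae h4ae]
      simp only [integral_const, smul_zero, smul_eq_mul, mul_zero]
      positivity
    · rw [integral_undef hI4]
      positivity
end
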